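/- Let k be a field of characteristic ≠ 2 and let q, q', p be nondegenerate quadratic forms over k such that q ⊥ p ≅ q' ⊥ p. Then q ≅ q' (Witt cancellation). -/

import Mathlib

open QuadraticMap

section Witt

variable {k : Type*} [Field k] {V : Type*} [AddCommGroup V] [Module k V]

/-- The reflection in a vector of nonzero norm, as a linear map. -/
noncomputable def reflMap (Q : QuadraticForm k V) (w : V) : V →ₗ[k] V :=
  LinearMap.id - (((Q w)⁻¹ • Q.polarBilin w).smulRight w)

lemma reflMap_apply (Q : QuadraticForm k V) (w x : V) :
    reflMap Q w x = x - ((Q w)⁻¹ * polar (⇑Q) w x) • w := by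
  simp [reflMap, smul_smul]

lemma polar_self_eq (Q : QuadraticForm k V) (x : V) : polar (⇑Q) x x = 2 * Q x := by
  rw [polar_self, two_nsmul, two_mul]

lemma reflMap_involutive (Q : QuadraticForm k V) (w : V) (hw : Q w ≠ 0) :
    Function.Involutive (reflMap Q w) := by
  intro x
  rw [reflMap_apply, reflMap_apply, polar_sub_right, polar_smul_right, polar_self_eq,
    sub_sub, ← add_smul]
  have hs : (Q w)⁻¹ * polar (⇑Q) w x +
      (Q w)⁻¹ * (polar (⇑Q) w x - ((Q w)⁻¹ * polar (⇑Q) w x) • (2 * Q w)) = 0 := by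
    simp only [smul_eq_mul]
    field_simp
    ring
  rw [hs, zero_smul, sub_zero]

lemma reflMap_isometry (Q : QuadraticForm k V) (w : V) (hw : Q w ≠ 0) (x : V) :
    Q (reflMap Q w x) = Q x := by
  rw [reflMap_apply, sub_eq_add_neg, ← neg_smul]
  have hQadd : ∀ a b : V, Q (a + b) = Q a + Q b + polar (⇑Q) a b := by
    intro a b; simp [polar]
  rw [hQadd, QuadraticMap.map_smul, polar_smul_right, polar_comm]
  simp only [smul_eq_mul]
  field_simp
  ring

/-- Reflection as an isometry equivalence. -/
noncomputable def reflQF (Q : QuadraticForm k V) (w : V) (hw : Q w ≠ 0) :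
    Q.IsometryEquiv Q where
  toLinearEquiv := LinearEquiv.ofInvolutive (reflMap Q w) (reflMap_involutive Q w hw)
  map_app' := reflMap_isometry Q w hw

lemma reflQF_apply (Q : QuadraticForm k V) (w : V) (hw : Q w ≠ 0) (x : V) :
    reflQF Q w hw x = x - ((Q w)⁻¹ * polar (⇑Q) w x) • w :=
  reflMap_apply Q w x

end Witt

section Witt2
variable {k : Type*} [Field k] {V : Type*} [AddCommGroup V] [Module k V]

theorem exists_isometryEquiv_map_eq (Q : QuadraticForm k V) (hchar : (2 : k) ≠ 0)
    {u v : V} (huv : Q u = Q v) (hu : Q u ≠ 0) :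
    ∃ g : Q.IsometryEquiv Q, g u = v := by
  have hQadd : ∀ a b : V, Q (a + b) = Q a + Q b + polar (⇑Q) a b := by
    intro a b; simp [polar]
  have hQsub : ∀ a b : V, Q (a - b) = Q a + Q b - polar (⇑Q) a b := by
    intro a b
    rw [sub_eq_add_neg, hQadd, polar_neg_right, QuadraticMap.map_neg]
    ring
  by_cases h1 : Q (u - v) ≠ 0
  · refine ⟨reflQF Q (u - v) h1, ?_⟩
    rw [reflQF_apply]
    have hpol : polar (⇑Q) (u - v) u = Q (u - v) := by
      rw [polar_sub_left, polar_self_eq, hQsub, huv, polar_comm]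
      ring
    rw [hpol, inv_mul_cancel₀ h1, one_smul, sub_sub_cancel]
  · push_neg at h1
    have hsum : Q (u + v) + Q (u - v) = 2 * 2 * Q u := by
      rw [hQadd, hQsub, huv]; ring
    have h2 : Q (u + v) ≠ 0 := by
      intro h2
      rw [h1, h2, add_zero] at hsum
      exact hu (by
        have h4 : (2 : k) * 2 ≠ 0 := mul_ne_zero hchar hchar
        field_simp at hsum
        exact (mul_eq_zero.mp hsum.symm).resolve_left (pow_ne_zero 2 hchar))
    have hv : Q v ≠ 0 := huv ▸ hu
    refine ⟨(reflQF Q (u + v) h2).trans (reflQF Q v hv), ?_⟩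
    have hstep : (reflQF Q (u + v) h2) u = -v := by
      rw [reflQF_apply]
      have hpol : polar (⇑Q) (u + v) u = Q (u + v) := by
        rw [polar_add_left, polar_self_eq, hQadd, huv, polar_comm]
        ring
      rw [hpol, inv_mul_cancel₀ h2, one_smul]
      abel
    have htrans : ((reflQF Q (u + v) h2).trans (reflQF Q v hv)) u
        = (reflQF Q v hv) ((reflQF Q (u + v) h2) u) := rfl
    rw [htrans, hstep, reflQF_apply, polar_neg_right, polar_self_eq]
    rw [show (Q v)⁻¹ * -(2 * Q v) = -2 by field_simp]
    rw [neg_smul, sub_neg_eq_add, two_smul]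
    abel

end Witt2

section Cancel
variable {k : Type*} [Field k]
variable {M₁ M₂ : Type*} [AddCommGroup M₁] [Module k M₁] [AddCommGroup M₂] [Module k M₂]

lemma polar_map_isometryEquiv {Q₁ : QuadraticForm k M₁} {Q₂ : QuadraticForm k M₂}
    (f : Q₁.IsometryEquiv Q₂) (x y : M₁) :
    polar (⇑Q₂) (f x) (f y) = polar (⇑Q₁) x y := by
  simp only [polar, ← map_add, IsometryEquiv.map_app]

lemma snd_eq_zero_of_fix {Q₁ : QuadraticForm k M₁} {Q₂ : QuadraticForm k M₂}
    (hchar : (2 : k) ≠ 0) {a : k} (ha : a ≠ 0)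
    (F : (Q₁.prod (a • (sq : QuadraticForm k k))).IsometryEquiv (Q₂.prod (a • (sq : QuadraticForm k k))))
    (hF : F (0, 1) = (0, 1)) (x : M₁) : (F (x, 0)).2 = 0 := by
  have h0 : polar (⇑(Q₂.prod (a • (sq : QuadraticForm k k)))) (F (x, 0)) (F (0, 1)) =
      polar (⇑(Q₁.prod (a • (sq : QuadraticForm k k)))) (x, 0) ((0 : M₁), (1 : k)) :=
    polar_map_isometryEquiv F _ _
  rw [hF] at h0
  have hsq : ∀ s t : k, polar (⇑(a • (sq : QuadraticForm k k))) s t = a * (2 * s * t) := by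
    intro s t
    simp [polar, QuadraticMap.sq_apply]
    ring
  simp only [polar_prod, polar_zero_left, polar_zero_right, hsq, zero_add, add_zero,
    mul_one, mul_zero] at h0
  rcases mul_eq_zero.mp h0 with h | h
  · exact absurd h ha
  · rcases mul_eq_zero.mp h with h' | h'
    · exact absurd h' hchar
    · exact h'

theorem cancel_one (hchar : (2 : k) ≠ 0)
    (Q₁ : QuadraticForm k M₁) (Q₂ : QuadraticForm k M₂) {a : k} (ha : a ≠ 0)
    (h : (Q₁.prod (a • (sq : QuadraticForm k k))).Equivalent (Q₂.prod (a • (sq : QuadraticForm k k)))) : Q₁.Equivalent Q₂ := by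
  obtain ⟨f⟩ := h
  have hval : (Q₂.prod (a • (sq : QuadraticForm k k))) (f (0, 1)) = a := by
    rw [IsometryEquiv.map_app]
    simp [QuadraticMap.prod_apply, QuadraticMap.sq_apply]
  have hval' : (Q₂.prod (a • (sq : QuadraticForm k k))) ((0 : M₂), (1 : k)) = a := by
    simp [QuadraticMap.prod_apply, QuadraticMap.sq_apply]
  obtain ⟨g, hg⟩ := exists_isometryEquiv_map_eq (Q₂.prod (a • (sq : QuadraticForm k k))) hchar
    (u := f (0, 1)) (v := ((0 : M₂), (1 : k))) (by rw [hval, hval']) (by rw [hval]; exact ha)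
  set F := f.trans g with hFdef
  have hF : F (0, 1) = (0, 1) := by
    have : F (0, 1) = g (f (0, 1)) := rfl
    rw [this, hg]
  have hFsymm : F.symm (0, 1) = (0, 1) := by
    have : F.symm (F (0, 1)) = (0, 1) := F.toLinearEquiv.symm_apply_apply _
    rwa [hF] at this
  have key₁ : ∀ x : M₁, (F (x, 0)).2 = 0 := snd_eq_zero_of_fix hchar ha F hF
  have key₂ : ∀ y : M₂, (F.symm (y, 0)).2 = 0 := snd_eq_zero_of_fix hchar ha F.symm hFsymm
  -- the induced linear maps
  let ψ : M₁ →ₗ[k] M₂ := (LinearMap.fst k M₂ k) ∘ₗ (F.toLinearEquiv : M₁ × k →ₗ[k] M₂ × k)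
      ∘ₗ (LinearMap.inl k M₁ k)
  let φ : M₂ →ₗ[k] M₁ := (LinearMap.fst k M₁ k) ∘ₗ (F.symm.toLinearEquiv : M₂ × k →ₗ[k] M₁ × k)
      ∘ₗ (LinearMap.inl k M₂ k)
  have hψ : ∀ x : M₁, F (x, 0) = (ψ x, 0) := by
    intro x
    refine Prod.ext rfl ?_
    exact key₁ x
  have hφ : ∀ y : M₂, F.symm (y, 0) = (φ y, 0) := by
    intro y
    refine Prod.ext rfl ?_
    exact key₂ y
  have hleft : ∀ x : M₁, φ (ψ x) = x := by
    intro x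
    have : F.symm (ψ x, 0) = (x, 0) := by
      rw [← hψ x]
      exact F.toLinearEquiv.symm_apply_apply _
    rw [hφ (ψ x)] at this
    exact congrArg Prod.fst this
  have hright : ∀ y : M₂, ψ (φ y) = y := by
    intro y
    have : F (φ y, 0) = (y, 0) := by
      rw [← hφ y]
      exact F.toLinearEquiv.apply_symm_apply _
    rw [hψ (φ y)] at this
    exact congrArg Prod.fst this
  refine ⟨⟨LinearEquiv.ofLinear ψ φ (LinearMap.ext hright) (LinearMap.ext hleft), ?_⟩⟩
  intro x
  have h1 : (Q₂.prod (a • (sq : QuadraticForm k k))) (ψ x, 0) = Q₂ (ψ x) := by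
    simp [QuadraticMap.prod_apply, QuadraticMap.sq_apply]
  have h2 : (Q₁.prod (a • (sq : QuadraticForm k k))) (x, 0) = Q₁ x := by
    simp [QuadraticMap.prod_apply, QuadraticMap.sq_apply]
  calc Q₂ (LinearEquiv.ofLinear ψ φ (LinearMap.ext hright) (LinearMap.ext hleft) x)
      = Q₂ (ψ x) := rfl
    _ = (Q₂.prod (a • (sq : QuadraticForm k k))) (ψ x, 0) := h1.symm
    _ = (Q₂.prod (a • (sq : QuadraticForm k k))) (F (x, 0)) := by rw [hψ x]
    _ = (Q₁.prod (a • (sq : QuadraticForm k k))) (x, 0) := F.map_app _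
    _ = Q₁ x := h2

end Cancel

section Induct
variable {k : Type*} [Field k]

/-- `Fin.snoc` as a linear equivalence. -/
def snocLinearEquiv (n : ℕ) : ((Fin n → k) × k) ≃ₗ[k] (Fin (n + 1) → k) where
  toFun p := Fin.snoc p.1 p.2
  map_add' p q := by
    funext i
    refine Fin.lastCases ?_ (fun j => ?_) i <;>
      simp [Fin.snoc_castSucc, Fin.snoc_last]
  map_smul' c p := by
    funext i
    refine Fin.lastCases ?_ (fun j => ?_) i <;>
      simp [Fin.snoc_castSucc, Fin.snoc_last]
  invFun x := (Fin.init x, x (Fin.last n))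
  left_inv p := by simp [Fin.init_snoc, Fin.snoc_last]
  right_inv x := by simp [Fin.snoc_init_self]

/-- Isometry removing a trivial `Fin 0` factor. -/
def prodZeroIso {M : Type*} [AddCommGroup M] [Module k M] (Q : QuadraticForm k M)
    (w : Fin 0 → k) : (Q.prod (weightedSumSquares k w)).IsometryEquiv Q where
  toFun := Prod.fst
  invFun m := (m, 0)
  map_add' _ _ := rfl
  map_smul' _ _ := rfl
  left_inv p := Prod.ext rfl (Subsingleton.elim _ _)
  right_inv m := rfl
  map_app' p := by
    simp [QuadraticMap.prod_apply, weightedSumSquares_apply]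

/-- Isometry splitting off the last coordinate of a weighted sum of squares. -/
def prodSnocIso {M : Type*} [AddCommGroup M] [Module k M] (Q : QuadraticForm k M)
    {n : ℕ} (w : Fin (n + 1) → k) :
    (((Q.prod (weightedSumSquares k (w ∘ Fin.castSucc))).prod
        ((w (Fin.last n)) • (sq : QuadraticForm k k)))).IsometryEquiv
      (Q.prod (weightedSumSquares k w)) where
  toLinearEquiv :=
    ((LinearEquiv.prodAssoc k M (Fin n → k) k).trans
      ((LinearEquiv.refl k M).prodCongr (snocLinearEquiv n)))
  map_app' p := by
    obtain ⟨⟨m, y⟩, t⟩ := p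
    show (Q.prod (weightedSumSquares k w)) (m, Fin.snoc y t) = _
    simp only [QuadraticMap.prod_apply, weightedSumSquares_apply, QuadraticMap.smul_apply,
      QuadraticMap.sq_apply]
    rw [Fin.sum_univ_castSucc]
    simp only [Fin.snoc_castSucc, Fin.snoc_last, Function.comp_apply]
    simp only [smul_eq_mul]
    ring

theorem cancel_wss (hchar : (2 : k) ≠ 0) :
    ∀ (n : ℕ) (w : Fin n → k), (∀ i, w i ≠ 0) →
    ∀ {M₁ M₂ : Type*} [AddCommGroup M₁] [Module k M₁] [AddCommGroup M₂] [Module k M₂]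
    (Q₁ : QuadraticForm k M₁) (Q₂ : QuadraticForm k M₂),
    (Q₁.prod (weightedSumSquares k w)).Equivalent (Q₂.prod (weightedSumSquares k w)) →
    Q₁.Equivalent Q₂ := by
  intro n
  induction n with
  | zero =>
    intro w _ M₁ M₂ _ _ _ _ Q₁ Q₂ h
    obtain ⟨f⟩ := h
    exact ⟨((prodZeroIso Q₁ w).symm.trans f).trans (prodZeroIso Q₂ w)⟩
  | succ n ih =>
    intro w hw M₁ M₂ _ _ _ _ Q₁ Q₂ h
    obtain ⟨f⟩ := h
    have h2 : ((Q₁.prod (weightedSumSquares k (w ∘ Fin.castSucc))).prod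
        ((w (Fin.last n)) • (sq : QuadraticForm k k))).Equivalent
        ((Q₂.prod (weightedSumSquares k (w ∘ Fin.castSucc))).prod
        ((w (Fin.last n)) • (sq : QuadraticForm k k))) :=
      ⟨((prodSnocIso Q₁ w).trans f).trans (prodSnocIso Q₂ w).symm⟩
    have h3 := cancel_one hchar _ _ (hw (Fin.last n)) h2
    exact ih (w ∘ Fin.castSucc) (fun i => hw _) _ _ h3

end Induct


/-- A quadratic form is nondegenerate if its polar form has trivial radical. -/
def PolarNondeg {k V : Type*} [Field k] [AddCommGroup V] [Module k V]
    (q : QuadraticForm k V) : Prop :=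
  ∀ x : V, (∀ y : V, polar (⇑q) x y = 0) → x = 0

/-- Witt cancellation: over a field `k` of characteristic ≠ 2, if `q, q', p` are
nondegenerate quadratic forms with `q ⊥ p ≅ q' ⊥ p`, then `q ≅ q'`. -/
theorem stmt_11 {k M₁ M₂ N : Type*} [Field k]
    [AddCommGroup M₁] [Module k M₁] [FiniteDimensional k M₁]
    [AddCommGroup M₂] [Module k M₂] [FiniteDimensional k M₂]
    [AddCommGroup N] [Module k N] [FiniteDimensional k N]
    (hchar : (2 : k) ≠ 0)
    (q : QuadraticForm k M₁) (q' : QuadraticForm k M₂) (p : QuadraticForm k N)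
    (hq : PolarNondeg q) (hq' : PolarNondeg q') (hp : PolarNondeg p)
    (h : (q.prod p).Equivalent (q'.prod p)) :
    q.Equivalent q' := by
  haveI : Invertible (2 : k) := invertibleOfNonzero hchar
  have hsep : (QuadraticMap.associated (R := k) p).SeparatingLeft := by
    intro x hx
    apply hp
    intro y
    have h2 := hx y
    rw [QuadraticMap.associated_apply] at h2
    have : (⅟ (2 : k)) * polar (⇑p) x y = 0 := by
      simpa [polar] using h2
    rcases mul_eq_zero.mp this with h' | h'
    · exact absurd h' (Invertible.ne_zero _)
    · exact h'
  obtain ⟨w, ⟨f⟩⟩ := p.equivalent_weightedSumSquares_units_of_nondegenerate' hsep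
  have hwss : weightedSumSquares k w = weightedSumSquares k (fun i => (w i : k)) := by
    ext v
    simp [weightedSumSquares_apply, Units.smul_def]
  have hpe : p.Equivalent (weightedSumSquares k (fun i => ((w i : k)))) := by
    rw [← hwss]; exact ⟨f⟩
  have h1 : (q.prod (weightedSumSquares k (fun i => ((w i : k))))).Equivalent
      (q'.prod (weightedSumSquares k (fun i => ((w i : k))))) := by
    refine ((QuadraticMap.Equivalent.prod (QuadraticMap.Equivalent.refl q) hpe.symm).trans
      h).trans (QuadraticMap.Equivalent.prod (QuadraticMap.Equivalent.refl q') hpe)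
  exact cancel_wss hchar _ _ (fun i => (w i).ne_zero) q q' h1
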